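/- arXiv:1201.6203 — 2 statements merged into one kernel-verified Lean document; each statement's English description precedes it below -/
import Mathlib

section
/- For any n×n matrix C over a commutative ring, the difference Id − adj(Id + C) equals (C − (Tr C)·Id) + P₂(C), where P₂(C) is a matrix whose entries are polynomials in the entries of C with every monomial of degree at least 2 (and at most n−1). -/
/-!
Take for `P` the remainder `1 - adj (1 + X) - (X - tr X • 1)` of the generic matrix
`X = (X (i, j))`; the identity for `C` is its evaluation at `C`. Every entry of `adj (1 + X)` is a
determinant with one constant row and all other entries of degree `≤ 1`, so it has degree `≤ n - 1`.
The monomials of degree `< 2` cancel: sending `X q ↦ ε` and the other variables to `0`, with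
`ε² = 0`, reads off the constant term and the coefficient of `X q`, and whenever `r * r = 0` we have
`det (1 + r • M) = 1 + r tr M` and `(1 + r • M)⁻¹ = 1 - r • M`, so the remainder of `r • M` is zero.
-/

open Matrix MvPolynomial DualNumber TrivSqZeroExt

namespace Matrix

variable {n A : Type*} [Fintype n] [DecidableEq n] [CommRing A]

noncomputable def adjugateRemainder (C : Matrix n n A) : Matrix n n A :=
  1 - adjugate (1 + C) - (C - trace C • 1)

theorem one_sub_adjugate_one_add (C : Matrix n n A) :
    1 - adjugate (1 + C) = (C - trace C • 1) + adjugateRemainder C := by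
  rw [adjugateRemainder]; abel

theorem map_adjugateRemainder {B : Type*} [CommRing B] (f : A →+* B) (C : Matrix n n A) :
    (adjugateRemainder C).map f = adjugateRemainder (C.map f) := by
  simp only [adjugateRemainder, ← RingHom.mapMatrix_apply, map_sub, map_add, map_one,
    RingHom.map_adjugate]
  congr
  ext i j
  simp [trace, Matrix.one_apply, apply_ite f]

theorem adjugate_one_add_smul_of_mul_self_eq_zero {r : A} (hr : r * r = 0) (M : Matrix n n A) :
    adjugate (1 + r • M) = (1 + r * trace M) • 1 - r • M := by
  have hdet : det (1 + r • M) = 1 + r * trace M := by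
    rw [det_one_add_smul, pow_two, hr, mul_zero, add_zero, mul_comm]
  have hinv : (1 + r • M) * (1 - r • M) = 1 := by
    rw [mul_sub, mul_one, add_mul, one_mul, smul_mul_smul_comm, hr, zero_smul]; abel
  calc adjugate (1 + r • M) = adjugate (1 + r • M) * (1 + r • M) * (1 - r • M) := by
        rw [mul_assoc, hinv, mul_one]
    _ = (1 + r * trace M) • 1 - r • M := by
        rw [adjugate_mul, hdet, smul_mul, one_mul, smul_sub, smul_smul, add_mul, one_mul,
          mul_right_comm, hr, zero_mul, add_zero]

theorem adjugateRemainder_smul_of_mul_self_eq_zero {r : A} (hr : r * r = 0) (M : Matrix n n A) :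
    adjugateRemainder (r • M) = 0 := by
  rw [adjugateRemainder, adjugate_one_add_smul_of_mul_self_eq_zero hr, trace_smul, smul_eq_mul,
    add_smul, one_smul]
  abel

end Matrix

namespace MvPolynomial

variable {σ R : Type*} [CommRing R]

theorem aeval_single_eps [DecidableEq σ] (q : σ) (p : MvPolynomial σ R) :
    aeval (Pi.single q (ε : R[ε])) p
      = inl (constantCoeff p) + inr (coeff (Finsupp.single q 1) p) := by
  induction p using MvPolynomial.induction_on with
  | C a =>
    rw [aeval_C, algebraMap_eq_inl, constantCoeff_C, coeff_C,
      if_neg (Finsupp.single_ne_zero.2 one_ne_zero).symm, inr_zero, add_zero]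
  | add p₁ p₂ h₁ h₂ =>
    rw [map_add, h₁, h₂, map_add, coeff_add, inl_add, inr_add]; abel
  | mul_X p s ih =>
    rw [map_mul, aeval_X, ih, coeff_mul_X', map_mul, constantCoeff_X, mul_zero, inl_zero, zero_add]
    obtain rfl | hs := eq_or_ne s q
    · rw [Pi.single_eq_same, if_pos (by simp), tsub_self, ← constantCoeff_eq]
      ext <;> simp
    · rw [Pi.single_eq_of_ne hs, mul_zero, if_neg (by simp [hs]), inr_zero]

theorem mem_idealOfVars_sq_iff (p : MvPolynomial σ R) :
    p ∈ idealOfVars σ R ^ 2 ↔ constantCoeff p = 0 ∧ ∀ q, coeff (Finsupp.single q 1) p = 0 := by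
  rw [mem_pow_idealOfVars_iff']
  constructor
  · intro h
    exact ⟨h 0 (by simp), fun q => h _ (by simp)⟩
  · rintro ⟨h₀, h₁⟩ d hd
    obtain hd | hd : d.degree = 0 ∨ d.degree = 1 := by omega
    · rwa [(Finsupp.degree_eq_zero_iff d).1 hd]
    · obtain ⟨q, rfl⟩ := (Finsupp.sum_eq_one_iff d).1 hd
      exact h₁ q

theorem mem_idealOfVars_sq_of_forall_aeval_single_eps_eq_zero [DecidableEq σ] [Nonempty σ]
    {p : MvPolynomial σ R} (h : ∀ q, aeval (Pi.single q (ε : R[ε])) p = 0) :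
    p ∈ idealOfVars σ R ^ 2 := by
  simp only [aeval_single_eps, TrivSqZeroExt.ext_iff, fst_add, snd_add, fst_inl, fst_inr,
    snd_inl, snd_inr, fst_zero, snd_zero, add_zero, zero_add] at h
  exact (mem_idealOfVars_sq_iff p).2 ⟨(h (Classical.arbitrary σ)).1, fun q => (h q).2⟩

theorem totalDegree_X_le (s : σ) : (X s : MvPolynomial σ R).totalDegree ≤ 1 :=
  (totalDegree_monomial_le _ _).trans_eq (Finsupp.sum_single_index rfl)

theorem totalDegree_one_apply {ι : Type*} [DecidableEq ι] (i j : ι) :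
    ((1 : Matrix ι ι (MvPolynomial σ R)) i j).totalDegree = 0 := by
  rw [one_apply]
  split_ifs
  exacts [totalDegree_one, totalDegree_zero]

variable {ι : Type*} [Fintype ι] [DecidableEq ι]

theorem totalDegree_det_le (M : Matrix ι ι (MvPolynomial σ R)) (d : ι → ℕ)
    (h : ∀ i j, (M i j).totalDegree ≤ d i) : M.det.totalDegree ≤ ∑ i, d i := by
  rw [det_apply]
  refine (totalDegree_finsetSum _ _).trans (Finset.sup_le fun e _ => ?_)
  calc (e.sign • ∏ i, M (e i) i).totalDegree
      ≤ (∏ i, M (e i) i).totalDegree := totalDegree_smul_le _ _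
    _ ≤ ∑ i, (M (e i) i).totalDegree := totalDegree_finsetProd _ _
    _ ≤ ∑ i, d (e i) := Finset.sum_le_sum fun i _ => h _ _
    _ = ∑ i, d i := Equiv.sum_comp e d

theorem totalDegree_adjugate_apply_le (M : Matrix ι ι (MvPolynomial σ R))
    (h : ∀ i j, (M i j).totalDegree ≤ 1) (i j : ι) :
    (adjugate M i j).totalDegree ≤ Fintype.card ι - 1 := by
  rw [adjugate_apply]
  refine (totalDegree_det_le _ (Function.update 1 j 0) fun k l => ?_).trans_eq ?_
  · obtain rfl | hk := eq_or_ne k j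
    · rw [updateRow_self, Function.update_self, Pi.single_apply]
      split_ifs <;> simp
    · rw [updateRow_ne hk, Function.update_of_ne hk]
      exact h k l
  · rw [Finset.sum_update_of_mem (Finset.mem_univ j)]
    simp [Finset.card_sdiff]

end MvPolynomial

namespace Matrix

variable {n R : Type*} [DecidableEq n] [CommRing R]

theorem mvPolynomialX_map_aeval_single_eps (q : n × n) :
    (mvPolynomialX n n R).map (aeval (Pi.single q (ε : R[ε])))
      = (ε : R[ε]) • single q.1 q.2 1 := by
  ext i j : 1
  rw [map_apply, mvPolynomialX_apply, aeval_X, Matrix.smul_apply, single_apply, Pi.single_apply]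
  simp [Prod.ext_iff, eq_comm]

variable [Fintype n]

theorem adjugateRemainder_mvPolynomialX_apply_mem (i j : n) :
    adjugateRemainder (mvPolynomialX n n R) i j ∈ idealOfVars (n × n) R ^ 2 := by
  have : Nonempty (n × n) := ⟨(i, j)⟩
  refine mem_idealOfVars_sq_of_forall_aeval_single_eps_eq_zero fun q => ?_
  have h := map_adjugateRemainder (aeval (R := R) (Pi.single q (ε : R[ε])) : _ →+* R[ε])
    (mvPolynomialX n n R)
  rw [RingHom.coe_coe, mvPolynomialX_map_aeval_single_eps,
    adjugateRemainder_smul_of_mul_self_eq_zero eps_mul_eps] at h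
  exact congrFun (congrFun h i) j

theorem totalDegree_adjugateRemainder_mvPolynomialX_apply_le (i j : n) :
    (adjugateRemainder (mvPolynomialX n n R) i j).totalDegree ≤ max (Fintype.card n - 1) 1 := by
  have hone := totalDegree_one_apply (σ := n × n) (R := R) i j
  have hadj := totalDegree_adjugate_apply_le (1 + mvPolynomialX n n R)
    (fun k l => (totalDegree_add _ _).trans (by simp [totalDegree_one_apply, totalDegree_X_le])) i j
  have hX := totalDegree_X_le (R := R) (i, j)
  have htr : (trace (mvPolynomialX n n R)).totalDegree ≤ 1 :=
    (totalDegree_finsetSum _ _).trans (Finset.sup_le fun k _ => totalDegree_X_le (k, k))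
  have hmul := totalDegree_mul (trace (mvPolynomialX n n R)) ((1 : Matrix n n _) i j)
  simp only [adjugateRemainder, sub_apply, smul_apply, smul_eq_mul, mvPolynomialX_apply]
  refine (totalDegree_sub _ _).trans (max_le ((totalDegree_sub _ _).trans ?_)
    ((totalDegree_sub _ _).trans ?_)) <;> omega

end Matrix

/-- For any `n × n` matrix `C` over a commutative ring,
`Id − adj(Id + C) = (C − (Tr C)·Id) + P₂(C)`, where the entries of `P₂` are
polynomials in the entries of `C` all of whose monomials have degree at least `2`
and at most `n − 1`. -/
theorem adjugate_one_add_expansion (n : ℕ) (R : Type*) [CommRing R] :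
    ∃ P : Matrix (Fin n) (Fin n) (MvPolynomial (Fin n × Fin n) R),
      (∀ i j, ∀ d ∈ (P i j).support,
          2 ≤ d.sum (fun _ e => e) ∧ d.sum (fun _ e => e) ≤ n - 1) ∧
      ∀ C : Matrix (Fin n) (Fin n) R,
        (1 : Matrix (Fin n) (Fin n) R) - (1 + C).adjugate
          = (C - (Matrix.trace C) • (1 : Matrix (Fin n) (Fin n) R))
            + Matrix.of (fun i j => MvPolynomial.eval (fun q : Fin n × Fin n => C q.1 q.2) (P i j)) := by
  refine ⟨adjugateRemainder (mvPolynomialX (Fin n) (Fin n) R), fun i j d hd => ?_, fun C => ?_⟩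
  · have hlow : 2 ≤ d.sum (fun _ e => e) :=
      (mem_pow_idealOfVars_iff 2 _).1 (adjugateRemainder_mvPolynomialX_apply_mem i j) d hd
    have hup : d.sum (fun _ e => e) ≤ max (Fintype.card (Fin n) - 1) 1 :=
      (le_totalDegree hd).trans (totalDegree_adjugateRemainder_mvPolynomialX_apply_le i j)
    rw [Fintype.card_fin] at hup
    exact ⟨hlow, by omega⟩
  · rw [one_sub_adjugate_one_add]
    congr 1
    conv_lhs => rw [← mvPolynomialX_mapMatrix_eval C, RingHom.mapMatrix_apply,
      ← map_adjugateRemainder]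
    rfl
end

section
/- (Piola identity) For any C² map X : ℝⁿ → ℝⁿ, the row-wise divergence of the adjugate of the Jacobian matrix vanishes: div_y(adj(D_yX)) = 0. -/
open Matrix

/-!
Write `adj(M)ᵢⱼ = det(M with row j replaced by eᵢ)` and differentiate the determinant row by
row. The replaced row is constant, so `Σᵢ ∂ᵢ adj(DX)ᵢⱼ` becomes, for each row `k ≠ j`,
`Σᵢ,ₗ ∂ᵢ∂ₗXᵏ · det(DX with rows j, k replaced by eᵢ, eₗ)`. The Hessian factor is symmetric in
`(i, l)` while the determinant is alternating in `(i, l)`, so each such sum vanishes. This only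
needs `∂ᵢ Mₖₗ = ∂ₗ Mₖᵢ`, so the identity holds for every matrix field `M` with curl-free rows.
-/

/-- The Jacobian matrix of a map `f : ℝⁿ → ℝⁿ`, with convention `(Df)_{ij} = ∂_j f^i`. -/
noncomputable def jacMat {n : ℕ} (f : EuclideanSpace ℝ (Fin n) → EuclideanSpace ℝ (Fin n))
    (y : EuclideanSpace ℝ (Fin n)) : Matrix (Fin n) (Fin n) ℝ :=
  fun i j => fderiv ℝ f y (EuclideanSpace.single j 1) i

noncomputable def pd {n : ℕ} (i : Fin n) (g : EuclideanSpace ℝ (Fin n) → ℝ)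
    (x : EuclideanSpace ℝ (Fin n)) : ℝ :=
  fderiv ℝ g x (EuclideanSpace.single i 1)

section Algebra

variable {ι R : Type*} [Fintype ι] [CommRing R]

theorem sum_sum_mul_eq_zero_of_symm_of_alternating (H B : ι → ι → R)
    (hH : ∀ i l, H l i = H i l) (hB : ∀ i l, B l i = -B i l) (hB₀ : ∀ i, B i i = 0) :
    ∑ i, ∑ l, H i l * B i l = 0 := by
  rw [← Finset.sum_product']
  refine Finset.sum_involution (fun p _ => p.swap) (fun p _ => ?_) (fun p _ hp hfix => ?_)
    (fun p _ => Finset.mem_univ _) (fun p _ => p.swap_swap)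
  · simp only [Prod.fst_swap, Prod.snd_swap, hH p.1 p.2, hB p.1 p.2]
    ring
  · obtain ⟨i, l⟩ := p
    obtain rfl : l = i := congrArg Prod.fst hfix
    exact hp (by simp [hB₀])

variable [DecidableEq ι]

theorem Matrix.det_updateRow_updateRow_swap (A : Matrix ι ι R) {j k : ι} (hjk : j ≠ k)
    (u w : ι → R) :
    ((A.updateRow j u).updateRow k w).det = -((A.updateRow j w).updateRow k u).det := by
  have h := det_permute (Equiv.swap j k) ((A.updateRow j w).updateRow k u)
  rw [Equiv.Perm.sign_swap hjk, Units.val_neg, Units.val_one, Int.cast_neg, Int.cast_one,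
    neg_one_mul] at h
  rw [← h]
  congr 1
  ext a b
  simp only [updateRow_apply, submatrix_apply, id, Equiv.swap_apply_def]
  split_ifs <;> simp_all

theorem Matrix.det_updateRow_eq_sum (A : Matrix ι ι R) (k : ι) (w : ι → R) :
    (A.updateRow k w).det = ∑ l, w l * (A.updateRow k (Pi.single l 1)).det :=
  calc (A.updateRow k w).det = (A.updateRow k (∑ l, w l • Pi.single l 1)).det := by
        rw [← pi_eq_sum_univ']
    _ = ∑ l, (A.updateRow k (w l • Pi.single l 1)).det :=
        (detRowAlternating : (ι → R) [⋀^ι]→ₗ[R] R).map_update_sum _ k _ A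
    _ = ∑ l, w l * (A.updateRow k (Pi.single l 1)).det := by
        simp only [det_updateRow_smul]

theorem Matrix.sum_det_updateRow_single_updateRow_eq_zero (A : Matrix ι ι R) {j k : ι}
    (hjk : j ≠ k) (H : ι → ι → R) (hH : ∀ i l, H l i = H i l) :
    ∑ i, ((A.updateRow j (Pi.single i 1)).updateRow k (H i)).det = 0 := by
  simp only [det_updateRow_eq_sum _ k (H _)]
  refine sum_sum_mul_eq_zero_of_symm_of_alternating H _ hH
    (fun i l => det_updateRow_updateRow_swap A hjk _ _) (fun i => det_zero_of_row_eq hjk ?_)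
  rw [updateRow_self, updateRow_ne hjk, updateRow_self]

end Algebra

section Calculus

variable {𝕜 ι G : Type*} [NontriviallyNormedField 𝕜] [Fintype ι] [DecidableEq ι]
  [NormedAddCommGroup G] [NormedSpace 𝕜 G]

variable (𝕜 ι) in
noncomputable def Matrix.detRowContinuousMultilinearMap :
    ContinuousMultilinearMap 𝕜 (fun _ : ι => ι → 𝕜) 𝕜 where
  toMultilinearMap := (detRowAlternating : (ι → 𝕜) [⋀^ι]→ₗ[𝕜] 𝕜).toMultilinearMap
  cont := continuous_id.matrix_det

theorem fderiv_det_apply {N : G → Matrix ι ι 𝕜} {y : G}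
    (hN : ∀ k, DifferentiableAt 𝕜 (fun z => N z k) y) (v : G) :
    fderiv 𝕜 (fun z => (N z).det) y v
      = ∑ k, ((N y).updateRow k (fderiv 𝕜 (fun z => N z k) y v)).det := by
  have h := HasFDerivAt.multilinear_comp (detRowContinuousMultilinearMap 𝕜 ι)
    fun k => (hN k).hasFDerivAt
  change fderiv 𝕜 (fun z => detRowContinuousMultilinearMap 𝕜 ι fun k => N z k) y v = _
  rw [h.fderiv]
  simp only [FunLike.coe_sum, Finset.sum_apply, ContinuousLinearMap.coe_comp,
    Function.comp_apply, ContinuousMultilinearMap.toContinuousLinearMap_apply]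
  rfl

end Calculus

section Piola

variable {n : ℕ}

theorem sum_pd_adjugate_eq_zero {M : EuclideanSpace ℝ (Fin n) → Matrix (Fin n) (Fin n) ℝ}
    {y : EuclideanSpace ℝ (Fin n)} (hM : ∀ k, DifferentiableAt ℝ (fun z => M z k) y)
    (hM_symm : ∀ k i l, fderiv ℝ (fun z => M z k) y (EuclideanSpace.single i 1) l
      = fderiv ℝ (fun z => M z k) y (EuclideanSpace.single l 1) i) (j : Fin n) :
    ∑ i, pd i (fun z => (M z).adjugate i j) y = 0 := by
  have hrow : ∀ i k, (fun z => (M z).updateRow j (Pi.single i 1) k)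
      = if k = j then fun _ => Pi.single i 1 else fun z => M z k := by
    intro i k
    split_ifs with hk <;> funext z <;> simp [hk]
  have hdiff : ∀ i k, DifferentiableAt ℝ (fun z => (M z).updateRow j (Pi.single i 1) k) y := by
    intro i k
    rw [hrow]
    split_ifs
    exacts [differentiableAt_const _, hM k]
  have hderiv : ∀ i k, fderiv ℝ (fun z => (M z).updateRow j (Pi.single i 1) k) y
      = if k = j then 0 else fderiv ℝ (fun z => M z k) y := by
    intro i k
    rw [hrow]
    split_ifs
    exacts [fderiv_const_apply _, rfl]
  simp only [pd, adjugate_apply, fderiv_det_apply (hdiff _), hderiv]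
  rw [Finset.sum_comm]
  refine Finset.sum_eq_zero fun k _ => ?_
  by_cases hk : k = j
  · refine Finset.sum_eq_zero fun i _ => det_eq_zero_of_row_eq_zero k fun l => ?_
    simp [hk]
  · simp only [hk, if_false]
    exact sum_det_updateRow_single_updateRow_eq_zero (M y) (Ne.symm hk) _
      fun i l => hM_symm k l i

noncomputable def matrixRowCLM (k : Fin n) :
    (EuclideanSpace ℝ (Fin n) →L[ℝ] EuclideanSpace ℝ (Fin n)) →L[ℝ] (Fin n → ℝ) :=
  ContinuousLinearMap.pi fun l =>
    (EuclideanSpace.proj k).comp (ContinuousLinearMap.apply ℝ _ (EuclideanSpace.single l 1))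

theorem hasFDerivAt_jacMat_row {X : EuclideanSpace ℝ (Fin n) → EuclideanSpace ℝ (Fin n)}
    {y : EuclideanSpace ℝ (Fin n)} (hX : DifferentiableAt ℝ (fderiv ℝ X) y) (k : Fin n) :
    HasFDerivAt (fun z => jacMat X z k) ((matrixRowCLM k).comp (fderiv ℝ (fderiv ℝ X) y)) y :=
  (matrixRowCLM k).hasFDerivAt.comp y hX.hasFDerivAt

end Piola

/-- Piola identity: for any `C²` map `X : ℝⁿ → ℝⁿ`, the row-wise divergence
of the adjugate of the Jacobian matrix vanishes: `Σᵢ ∂ᵢ (adj D_yX)ᵢⱼ = 0` for every `j`. -/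
theorem piola_identity {n : ℕ}
    (X : EuclideanSpace ℝ (Fin n) → EuclideanSpace ℝ (Fin n))
    (hX : ContDiff ℝ 2 X) (y : EuclideanSpace ℝ (Fin n)) (j : Fin n) :
    ∑ i, pd i (fun z => (jacMat X z).adjugate i j) y = 0 := by
  have hX' : DifferentiableAt ℝ (fderiv ℝ X) y :=
    (hX.fderiv_right le_rfl).differentiable one_ne_zero y
  have hrow := hasFDerivAt_jacMat_row hX'
  refine sum_pd_adjugate_eq_zero (fun k => (hrow k).differentiableAt) (fun k i l => ?_) j
  have hsymm := hX.contDiffAt.isSymmSndFDerivAt (x := y)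
    (by rw [minSmoothness_of_isRCLikeNormedField]) (EuclideanSpace.single i 1)
    (EuclideanSpace.single l 1)
  simp only [(hrow k).fderiv, matrixRowCLM, ContinuousLinearMap.comp_apply,
    ContinuousLinearMap.coe_pi', ContinuousLinearMap.apply_apply, hsymm, PiLp.proj_apply]
end
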